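/- Let $r \ge 2$ and $k \ge r$ be integers. The number of sequences $(i_j, k_j)_{j=1}^r$ of pairs of integers satisfying: $k_1,\dots,k_r \ge 1$, $k_1 + \cdots + k_r = k$, $-k_r + 1 \le i_r \le 0$, and $i_{j+1} - k_j + 1 \le i_j \le i_{j+1} + k_{j+1} - 1$ for all $1 \le j \le r-1$, is at most $e^{3k}$. -/

import Mathlib

/-!
Write `k_j` for the row lengths and `a_j = i_j - i_{j+1} + k_j` (with `i_{r+1} = 0`) for the
offset of row `j` relative to row `j + 1`. The compatibility conditions say exactly that
`1 ≤ a_j ≤ k_j + k_{j+1} - 1`, so `(a_j)` is a vector of positive integers with sum at most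
`2k`, and `(k_j)` one with sum `k`. A configuration is determined by the two vectors, since the
`i_j` are recovered from the differences `a_j - k_j` from the last row upwards. Appending the
slack `n + 1 - ∑ a_j` turns a positive vector with sum at most `n` into a composition of
`n + 1`, so there are at most `2 ^ n` of them, and the count is at most
`2 ^ (2k) * 2 ^ k ≤ e ^ (3k)`.
-/

open Real

namespace CompatibleConfigs

def boundedPosVecs (r n : ℕ) : Set (Fin r → ℤ) :=
  {a | (∀ j, 1 ≤ a j) ∧ ∑ j, a j ≤ n}

section Counting

variable {r n : ℕ}

lemma sum_toNat_le (a : boundedPosVecs r n) : ∑ j, (a.1 j).toNat ≤ n := by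
  have hnonneg j : 0 ≤ a.1 j := (a.2.1 j).trans' zero_le_one
  zify [hnonneg]
  simpa [Int.toNat_of_nonneg (hnonneg _)] using a.2.2

def toComposition (a : boundedPosVecs r n) : Composition (n + 1) where
  blocks := List.ofFn (fun j => (a.1 j).toNat) ++ [n + 1 - ∑ j, (a.1 j).toNat]
  blocks_pos := by
    have := sum_toNat_le a
    simp only [List.mem_append, List.mem_ofFn, List.mem_singleton]
    rintro i (⟨j, rfl⟩ | rfl)
    · have := a.2.1 j
      omega
    · omega
  blocks_sum := by
    have := sum_toNat_le a
    simp only [List.sum_append, List.sum_ofFn, List.sum_singleton]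
    omega

lemma toComposition_injective :
    Function.Injective (toComposition (r := r) (n := n)) := by
  intro a b hab
  have hblocks := congrArg Composition.blocks hab
  have hfn := List.ofFn_injective (List.append_inj_left hblocks (by simp))
  ext j
  have := congrFun hfn j
  have := a.2.1 j
  have := b.2.1 j
  omega

lemma finite_boundedPosVecs : (boundedPosVecs r n).Finite :=
  Set.finite_coe_iff.mp (Finite.of_injective _ toComposition_injective)

lemma ncard_boundedPosVecs_le : (boundedPosVecs r n).ncard ≤ 2 ^ n := by
  rw [← Nat.card_coe_set_eq]
  calc Nat.card (boundedPosVecs r n)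
      ≤ Nat.card (Composition (n + 1)) :=
        Nat.card_le_card_of_injective _ toComposition_injective
    _ = 2 ^ n := by rw [Nat.card_eq_fintype_card, composition_card, Nat.add_sub_cancel]

end Counting

section Offsets

variable {r : ℕ}

def shiftLeft (i : Fin r → ℤ) (j : Fin r) : ℤ :=
  if h : (j : ℕ) + 1 < r then i ⟨j + 1, h⟩ else 0

lemma shiftLeft_of_lt (i : Fin r → ℤ) {j : Fin r} (h : (j : ℕ) + 1 < r) :
    shiftLeft i j = i ⟨j + 1, h⟩ :=
  dif_pos h

lemma shiftLeft_of_not_lt (i : Fin r → ℤ) {j : Fin r} (h : ¬(j : ℕ) + 1 < r) :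
    shiftLeft i j = 0 :=
  dif_neg h

lemma sum_shiftLeft_le {f : Fin r → ℤ} (hf : ∀ j, 0 ≤ f j) :
    ∑ j, shiftLeft f j ≤ ∑ j, f j := by
  cases r with
  | zero => simp
  | succ n =>
    have hsucc (j : Fin n) : shiftLeft f j.castSucc = f j.succ :=
      shiftLeft_of_lt f (by simp)
    rw [Fin.sum_univ_castSucc, Fin.sum_univ_succ, shiftLeft_of_not_lt f (by simp)]
    simp only [hsucc, add_zero]
    linarith [hf 0]

lemma eq_of_sub_shiftLeft_eq {i i' : Fin r → ℤ}
    (h : ∀ j, i j - shiftLeft i j = i' j - shiftLeft i' j) : i = i' := by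
  funext j
  induction j using WellFoundedGT.induction with
  | _ j ih =>
    have hj := h j
    by_cases hlt : (j : ℕ) + 1 < r
    · rw [shiftLeft_of_lt _ hlt, shiftLeft_of_lt _ hlt,
        ih ⟨j + 1, hlt⟩ (Fin.lt_def.2 (by simp))] at hj
      linarith
    · rw [shiftLeft_of_not_lt _ hlt, shiftLeft_of_not_lt _ hlt] at hj
      linarith

def offset (i k : Fin r → ℤ) (j : Fin r) : ℤ :=
  i j - shiftLeft i j + k j

lemma offset_injective :
    Function.Injective fun q : (Fin r → ℤ) × (Fin r → ℤ) => (offset q.1 q.2, q.2) := by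
  rintro ⟨i, k⟩ ⟨i', k'⟩ h
  obtain ⟨hoff, rfl⟩ := Prod.mk.inj h
  obtain rfl := eq_of_sub_shiftLeft_eq fun j => by simpa [offset] using congrFun hoff j
  rfl

lemma offset_mem_boundedPosVecs {n : ℕ} {i k : Fin r → ℤ} (hk : k ∈ boundedPosVecs r n)
    (hlow : ∀ j, shiftLeft i j - k j + 1 ≤ i j)
    (hup : ∀ j, i j ≤ shiftLeft i j + shiftLeft k j) :
    offset i k ∈ boundedPosVecs r (2 * n) := by
  refine ⟨fun j => by unfold offset; linarith [hlow j], ?_⟩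
  have hshift : ∑ j, shiftLeft k j ≤ n :=
    (sum_shiftLeft_le fun j => (hk.1 j).trans' zero_le_one).trans hk.2
  calc ∑ j, offset i k j
      ≤ ∑ j, (k j + shiftLeft k j) :=
        Finset.sum_le_sum fun j _ => by unfold offset; linarith [hup j]
    _ = ∑ j, k j + ∑ j, shiftLeft k j := Finset.sum_add_distrib
    _ ≤ ↑(2 * n) := by push_cast; linarith [hk.2]

end Offsets

lemma two_pow_le_exp (n : ℕ) : (2 : ℝ) ^ n ≤ exp n := by
  rw [← exp_one_pow]
  exact pow_le_pow_left₀ zero_le_two (by linarith [add_one_le_exp (1 : ℝ)]) n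

end CompatibleConfigs

/-- The set of encodings `(i_j, k_j)_{j=1}^r` of compatible box configurations with `k`
boxes in `r` rows (Lemma `cardBk`) is finite and has cardinality at most `e^{3k}`. -/
theorem card_compatible_configs (r k : ℕ) (hr : 2 ≤ r)
    (S : Set ((Fin r → ℤ) × (Fin r → ℤ)))
    (hS : S = {q : (Fin r → ℤ) × (Fin r → ℤ) |
        (∀ j, 1 ≤ q.2 j) ∧ (∑ j, q.2 j = (k : ℤ)) ∧
        (-(q.2 ⟨r - 1, by omega⟩) + 1 ≤ q.1 ⟨r - 1, by omega⟩ ∧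
          q.1 ⟨r - 1, by omega⟩ ≤ 0) ∧
        (∀ j : Fin r, ∀ hj : (j : ℕ) + 1 < r,
          q.1 ⟨(j : ℕ) + 1, hj⟩ - q.2 j + 1 ≤ q.1 j ∧
            q.1 j ≤ q.1 ⟨(j : ℕ) + 1, hj⟩ + q.2 ⟨(j : ℕ) + 1, hj⟩ - 1)}) :
    S.Finite ∧ (S.ncard : ℝ) ≤ exp (3 * k) := by
  open CompatibleConfigs in
  have hmaps : ∀ q ∈ S,
      (offset q.1 q.2, q.2) ∈ boundedPosVecs r (2 * k) ×ˢ boundedPosVecs r k := by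
    intro q hq
    rw [hS] at hq
    obtain ⟨hpos, hsum, hlast, hstep⟩ := hq
    have hrow (j : Fin r) : shiftLeft q.1 j - q.2 j + 1 ≤ q.1 j ∧
        q.1 j ≤ shiftLeft q.1 j + shiftLeft q.2 j := by
      by_cases h : (j : ℕ) + 1 < r
      · rw [shiftLeft_of_lt _ h, shiftLeft_of_lt _ h]
        constructor <;> linarith [hstep j h]
      · have hj : j = ⟨r - 1, by omega⟩ := Fin.ext (by simp only; omega)
        rw [shiftLeft_of_not_lt _ h, shiftLeft_of_not_lt _ h, hj]
        constructor <;> linarith [hlast]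
    have hq2 : q.2 ∈ boundedPosVecs r k := ⟨hpos, hsum.le⟩
    exact ⟨offset_mem_boundedPosVecs hq2 (fun j => (hrow j).1) (fun j => (hrow j).2), hq2⟩
  have hfin : (boundedPosVecs r (2 * k) ×ˢ boundedPosVecs r k).Finite :=
    finite_boundedPosVecs.prod finite_boundedPosVecs
  refine ⟨.of_finite_image (hfin.subset (Set.image_subset_iff.2 hmaps))
    offset_injective.injOn, ?_⟩
  calc (S.ncard : ℝ)
      ≤ (boundedPosVecs r (2 * k) ×ˢ boundedPosVecs r k).ncard := by
        exact_mod_cast Set.ncard_le_ncard_of_injOn _ hmaps offset_injective.injOn hfin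
    _ ≤ (2 : ℝ) ^ (2 * k) * 2 ^ k := by
        rw [Set.ncard_prod]
        exact_mod_cast Nat.mul_le_mul ncard_boundedPosVecs_le ncard_boundedPosVecs_le
    _ = 2 ^ (3 * k) := by ring
    _ ≤ exp (3 * k) := by exact_mod_cast two_pow_le_exp (3 * k)
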